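/- arXiv:1209.6473 — 4 statements merged into one kernel-verified Lean document; each statement's English description precedes it below -/
import Mathlib

section
/- If condition (c*) holds — for each ε > 0 there is δ > 0 such that limsup_n P(M_n(δ) > ε | H) < ε for all H ∈ G with P(H) > 0 — and U > 0 is G-measurable, then condition (e) holds: inf_{δ>0} limsup_n P(M_{⌊k_n U⌋}(δ) > ε) = 0 for all ε > 0. -/
open MeasureTheory ProbabilityTheory Filter Real Topology Set

/-- A bounded continuous real function. -/
def BddCont {S : Type*} [TopologicalSpace S] (f : S → ℝ) : Prop :=
  Continuous f ∧ ∃ C, ∀ x, |f x| ≤ C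

/-- Conditional expectation of `g` given the event `H`: `E[g | H]`. -/
noncomputable def cexp {Ω : Type*} {_mΩ : MeasurableSpace Ω} (P : Measure Ω) (H : Set Ω)
    (g : Ω → ℝ) : ℝ :=
  (∫ ω in H, g ω ∂P) / (P H).toReal

/-- `X n` converges `G`-stably to the kernel `K`: for every `H ∈ G` with `P H > 0` and every
bounded continuous `f`, `E[f(X n) | H] → E[K(f) | H]`. -/
def StablyTo {Ω S : Type*} (G : MeasurableSpace Ω) {_mΩ : MeasurableSpace Ω} [TopologicalSpace S]
    [MeasurableSpace S] (P : Measure Ω) (X : ℕ → Ω → S) (K : Ω → Measure S) : Prop :=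
  ∀ H : Set Ω, MeasurableSet[G] H → 0 < P H →
    ∀ f : S → ℝ, BddCont f →
      Tendsto (fun n => cexp P H fun ω => f (X n ω)) atTop
        (𝓝 (cexp P H fun ω => ∫ x, f x ∂(K ω)))

/-- The event `{M_{R}(δ) > ε}` where `M_R(δ) = max_{j : |R - j| ≤ R δ} d(X j, X R)`. -/
def Bad {Ω S : Type*} [PseudoMetricSpace S] (X : ℕ → Ω → S) (R : Ω → ℕ) (δ ε : ℝ) :
    Set Ω :=
  {ω | ∃ j : ℕ, |(R ω : ℝ) - j| ≤ (R ω : ℝ) * δ ∧ ε < dist (X j ω) (X (R ω) ω)}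

/-- The fluctuation condition `inf_{δ>0} limsup_n P(M_{R_n}(δ) > ε) = 0` for all `ε > 0`,
for a sequence of (possibly random) indices `R n`. -/
def FlucIdx {Ω S : Type*} {_mΩ : MeasurableSpace Ω} [PseudoMetricSpace S] (P : Measure Ω)
    (X : ℕ → Ω → S) (R : ℕ → Ω → ℕ) : Prop :=
  ∀ ε > (0:ℝ), (⨅ δ : Set.Ioi (0:ℝ), Filter.limsup (fun n => P (Bad X (R n) (δ : ℝ) ε)) atTop) = 0

/-! Cut the range of `U > 0` into the geometric slabs `{(1 + θ) ^ i ≤ U < (1 + θ) ^ (i + 1)}`,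
`i : ℤ`; they lie in `G`, and up to probability `η / 2` only finitely many of them matter. On a
slab with `U ≈ a`, the window of relative size `θ` around the random index `⌊k n * U⌋` lies in
the window of relative size `4 θ` around the deterministic index `⌊k n * a⌋`, so by the triangle
inequality an `ε`-fluctuation at the random index forces an `ε / 2`-fluctuation at the
deterministic one. Condition (c*) with `ε' = min (ε / 2) (η / 2)`, applied to the slab, bounds the
probability of the latter by `ε' * P slab` for large `n`, and summing over the disjoint slabs gives
`ε' + η / 2 ≤ η`. -/

open Function
open scoped ENNReal

lemma bad_mono {Ω S : Type*} [PseudoMetricSpace S] (X : ℕ → Ω → S) (R : Ω → ℕ)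
    {δ₁ δ₂ ε₁ ε₂ : ℝ} (hδ : δ₁ ≤ δ₂) (hε : ε₂ ≤ ε₁) : Bad X R δ₁ ε₁ ⊆ Bad X R δ₂ ε₂ :=
  fun _ ⟨j, hj, hdist⟩ ↦
    ⟨j, hj.trans (mul_le_mul_of_nonneg_left hδ (Nat.cast_nonneg _)), hε.trans_lt hdist⟩

lemma mem_bad_half_of_mem_bad {Ω S : Type*} [PseudoMetricSpace S] {X : ℕ → Ω → S}
    {R R' : Ω → ℕ} {δ δ' ε : ℝ} {ω : Ω}
    (hR : |(R' ω : ℝ) - R ω| + R ω * δ ≤ R' ω * δ') (hω : ω ∈ Bad X R δ ε) :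
    ω ∈ Bad X R' δ' (ε / 2) := by
  obtain ⟨j, hj, hdist⟩ := hω
  have hR' : |(R' ω : ℝ) - R ω| ≤ R' ω * δ' := by linarith [(abs_nonneg _).trans hj]
  have hj' : |(R' ω : ℝ) - j| ≤ R' ω * δ' := by linarith [abs_sub_le (R' ω : ℝ) (R ω) j]
  have htri := dist_triangle (X j ω) (X (R' ω) ω) (X (R ω) ω)
  by_cases hjR' : ε / 2 < dist (X j ω) (X (R' ω) ω)
  · exact ⟨j, hj', hjR'⟩
  · exact ⟨R ω, hR', by rw [dist_comm]; linarith⟩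

lemma abs_floor_sub_floor_add_le {x y θ : ℝ} (hθ : 0 ≤ θ) (hθ₁ : θ ≤ 1)
    (hxθ : 1 + 4 * θ ≤ x * θ) (hxy : x ≤ y) (hyx : y ≤ x * (1 + θ)) :
    |(⌊x⌋₊ : ℝ) - ⌊y⌋₊| + ⌊y⌋₊ * θ ≤ ⌊x⌋₊ * (4 * θ) := by
  have hx : 0 ≤ x := by nlinarith
  have hfloor : (⌊x⌋₊ : ℝ) ≤ ⌊y⌋₊ := by exact_mod_cast Nat.floor_mono hxy
  rw [abs_sub_comm, abs_of_nonneg (sub_nonneg.mpr hfloor)]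
  nlinarith [Nat.floor_le hx, Nat.lt_floor_add_one x, Nat.floor_le (hx.trans hxy)]

lemma eventually_le_mul_of_limsup_div_lt {ι : Type*} {l : Filter ι} {f : ι → ℝ≥0∞}
    {c r : ℝ≥0∞} (hc₀ : c ≠ 0) (hc : c ≠ ∞) (h : limsup (fun i ↦ f i / c) l < r) :
    ∀ᶠ i in l, f i ≤ r * c := by
  filter_upwards [eventually_lt_of_limsup_lt h] with i hi
  exact ((ENNReal.div_lt_iff (.inl hc₀) (.inl hc)).mp hi).le

lemma iInf_limsup_eq_zero_of_forall_eventually_le {ι : Type*} {l : Filter ι}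
    {f : ℝ → ι → ℝ≥0∞} (h : ∀ η > (0 : ℝ), ∃ δ > (0 : ℝ), ∀ᶠ i in l, f δ i ≤ ENNReal.ofReal η) :
    ⨅ δ : Ioi (0 : ℝ), limsup (f δ) l = 0 := by
  refine le_antisymm (ENNReal.le_of_forall_pos_le_add fun η hη _ ↦ ?_) bot_le
  obtain ⟨δ, hδ, hf⟩ := h η hη
  rw [zero_add, ← ENNReal.ofReal_coe_nnreal]
  exact iInf_le_of_le ⟨δ, hδ⟩ (limsup_le_of_le (by isBoundedDefault) hf)

lemma exists_finset_measure_compl_biUnion_lt {α ι : Type*} {_ : MeasurableSpace α} [Countable ι]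
    {μ : Measure α} [IsFiniteMeasure μ] {H : ι → Set α} (hHm : ∀ i, MeasurableSet (H i))
    (hH : ⋃ i, H i = univ) {η : ℝ≥0∞} (hη : 0 < η) : ∃ s : Finset ι, μ (⋃ i ∈ s, H i)ᶜ < η := by
  have hanti : Antitone fun s : Finset ι ↦ (⋃ i ∈ s, H i)ᶜ :=
    fun s t hst ↦ compl_subset_compl.mpr (biUnion_subset_biUnion_left hst)
  have hinter : ⋂ s : Finset ι, (⋃ i ∈ s, H i)ᶜ = ∅ := by
    rw [← compl_iUnion, compl_empty_iff, eq_univ_iff_forall]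
    intro x
    obtain ⟨i, hi⟩ := mem_iUnion.mp (hH.symm ▸ mem_univ x : x ∈ ⋃ i, H i)
    exact mem_iUnion.mpr ⟨{i}, by simpa using hi⟩
  have hlim := tendsto_measure_iInter_atTop (μ := μ)
    (fun s ↦ (Finset.measurableSet_biUnion s fun i _ ↦ hHm i).compl.nullMeasurableSet)
    hanti ⟨∅, measure_ne_top _ _⟩
  rw [hinter, measure_empty] at hlim
  exact (hlim.eventually_lt_const hη).exists

lemma measure_le_add_of_inter_le_mul {α ι : Type*} {_ : MeasurableSpace α} {μ : Measure α}
    [IsProbabilityMeasure μ] {A : Set α} {H : ι → Set α} {s : Finset ι}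
    (hHm : ∀ i, MeasurableSet (H i)) (hH : Pairwise (Disjoint on H)) {a b : ℝ≥0∞}
    (hA : ∀ i ∈ s, μ (A ∩ H i) ≤ a * μ (H i)) (hs : μ (⋃ i ∈ s, H i)ᶜ ≤ b) : μ A ≤ a + b := by
  have hcover : A ⊆ (⋃ i ∈ s, A ∩ H i) ∪ (⋃ i ∈ s, H i)ᶜ := by
    intro x hx
    by_cases hxs : x ∈ ⋃ i ∈ s, H i
    · left
      simp only [mem_iUnion] at hxs ⊢
      obtain ⟨i, hi, hxi⟩ := hxs
      exact ⟨i, hi, hx, hxi⟩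
    · exact .inr hxs
  calc μ A ≤ μ (⋃ i ∈ s, A ∩ H i) + μ (⋃ i ∈ s, H i)ᶜ :=
        (measure_mono hcover).trans (measure_union_le _ _)
    _ ≤ ∑ i ∈ s, μ (A ∩ H i) + b := add_le_add (measure_biUnion_finset_le _ _) hs
    _ ≤ ∑ i ∈ s, a * μ (H i) + b := by gcongr with i hi; exact hA i hi
    _ = a * μ (⋃ i ∈ s, H i) + b := by
      rw [← Finset.mul_sum, measure_biUnion_finset (hH.set_pairwise _) fun i _ ↦ hHm i]
    _ ≤ a + b := by gcongr; exact mul_le_of_le_one_right' prob_le_one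

lemma iUnion_preimage_Ico_zpow_eq_univ {Ω : Type*} {U : Ω → ℝ} (hU : ∀ ω, 0 < U ω) {ρ : ℝ}
    (hρ : 1 < ρ) : ⋃ i : ℤ, U ⁻¹' Ico (ρ ^ i) (ρ ^ (i + 1)) = univ :=
  eq_univ_of_forall fun ω ↦ mem_iUnion.mpr (exists_mem_Ico_zpow (hU ω) hρ)

lemma pairwise_disjoint_preimage_Ico_zpow {Ω : Type*} (U : Ω → ℝ) {ρ : ℝ} (hρ : 1 ≤ ρ) :
    Pairwise (Disjoint on fun i : ℤ ↦ U ⁻¹' Ico (ρ ^ i) (ρ ^ (i + 1))) := fun i j hij ↦ by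
  simpa using ((zpow_right_mono₀ hρ).pairwise_disjoint_on_Ico_succ hij).preimage U

lemma eventually_bad_floor_inter_subset {Ω S : Type*} [PseudoMetricSpace S] (X : ℕ → Ω → S)
    {k : ℕ → ℝ} (hk : Tendsto k atTop atTop) (U : Ω → ℝ) {a θ ε : ℝ} (ha : 0 < a) (hθ : 0 < θ)
    (hθ₁ : θ ≤ 1) :
    ∀ᶠ n in atTop, Bad X (fun ω ↦ ⌊k n * U ω⌋₊) θ ε ∩ U ⁻¹' Icc a (a * (1 + θ)) ⊆
      Bad X (fun _ ↦ ⌊k n * a⌋₊) (4 * θ) (ε / 2) := by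
  filter_upwards [(hk.atTop_mul_const ha).eventually_ge_atTop ((1 + 4 * θ) / θ)] with n hn
  rintro ω ⟨hω, hωa, hωb⟩
  have hkn : 0 ≤ k n :=
    (pos_of_mul_pos_left ((by positivity : 0 < (1 + 4 * θ) / θ).trans_le hn) ha.le).le
  refine mem_bad_half_of_mem_bad (abs_floor_sub_floor_add_le hθ.le hθ₁ ?_ ?_ ?_) hω
  · exact (div_le_iff₀ hθ).mp hn
  · exact mul_le_mul_of_nonneg_left hωa hkn
  · rw [mul_assoc]
    exact mul_le_mul_of_nonneg_left hωb hkn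

lemma eventually_measure_bad_floor_inter_le {Ω S : Type*} {_ : MeasurableSpace Ω}
    [PseudoMetricSpace S] {P : Measure Ω} [IsFiniteMeasure P] {X : ℕ → Ω → S} {k : ℕ → ℝ}
    (hk : Tendsto k atTop atTop) {U : Ω → ℝ} {H : Set Ω} {a θ δ ε ε' α : ℝ}
    (hcs : 0 < P H →
      limsup (fun n ↦ P (Bad X (fun _ ↦ n) δ ε' ∩ H) / P H) atTop < ENNReal.ofReal α)
    (ha : 0 < a) (hθ : 0 < θ) (hθ₁ : θ ≤ 1) (hθδ : 4 * θ ≤ δ) (hε : ε' ≤ ε / 2)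
    (hHU : H ⊆ U ⁻¹' Icc a (a * (1 + θ))) :
    ∀ᶠ n in atTop, P (Bad X (fun ω ↦ ⌊k n * U ω⌋₊) θ ε ∩ H) ≤ ENNReal.ofReal α * P H := by
  rcases eq_zero_or_pos (P H) with hH | hH
  · exact .of_forall fun n ↦ (measure_mono inter_subset_right).trans (by simp [hH])
  have hfloor : Tendsto (fun n ↦ ⌊k n * a⌋₊) atTop atTop :=
    tendsto_nat_floor_atTop.comp (hk.atTop_mul_const ha)
  filter_upwards [hfloor.eventually (eventually_le_mul_of_limsup_div_lt hH.ne'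
    (measure_ne_top _ _) (hcs hH)), eventually_bad_floor_inter_subset X hk U ha hθ hθ₁]
    with n hn hsub
  have hsub' : Bad X (fun ω ↦ ⌊k n * U ω⌋₊) θ ε ∩ H ⊆ Bad X (fun _ ↦ ⌊k n * a⌋₊) δ ε' ∩ H :=
    fun ω hω ↦ ⟨bad_mono X _ hθδ hε (hsub ⟨hω.1, hHU hω.2⟩), hω.2⟩
  exact (measure_mono hsub').trans hn

theorem stmt8_general {Ω S : Type*} [mΩ : MeasurableSpace Ω] [MetricSpace S]
    (P : Measure Ω) [IsProbabilityMeasure P]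
    (G : MeasurableSpace Ω) (hG : G ≤ mΩ)
    (X : ℕ → Ω → S) (k : ℕ → ℝ) (U : Ω → ℝ)
    (hk' : Tendsto k atTop atTop)
    (hU : ∀ ω, 0 < U ω) (hUm : Measurable[G] U)
    (hcstar : ∀ ε > (0:ℝ), ∃ δ > (0:ℝ), ∀ H : Set Ω, MeasurableSet[G] H → 0 < P H →
      Filter.limsup (fun n => P (Bad X (fun _ => n) δ ε ∩ H) / P H) atTop
        < ENNReal.ofReal ε) :
    FlucIdx P X (fun n ω => ⌊k n * U ω⌋₊) := by
  intro ε hε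
  refine iInf_limsup_eq_zero_of_forall_eventually_le
    (f := fun δ n ↦ P (Bad X (fun ω ↦ ⌊k n * U ω⌋₊) δ ε)) fun η hη ↦ ?_
  set ε' := min (ε / 2) (η / 2)
  obtain ⟨δ, hδ, hcs⟩ := hcstar ε' (by positivity)
  set θ := min (δ / 4) 1
  have hθ : 0 < θ := by positivity
  set H : ℤ → Set Ω := fun i ↦ U ⁻¹' Ico ((1 + θ) ^ i) ((1 + θ) ^ (i + 1))
  have hHG : ∀ i, MeasurableSet[G] (H i) := fun i ↦ hUm measurableSet_Ico
  obtain ⟨s, hs⟩ := exists_finset_measure_compl_biUnion_lt (μ := P) (fun i ↦ hG _ (hHG i))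
    (iUnion_preimage_Ico_zpow_eq_univ hU (by linarith)) (ENNReal.ofReal_pos.mpr (half_pos hη))
  have hslab : ∀ i ∈ s, ∀ᶠ n in atTop,
      P (Bad X (fun ω ↦ ⌊k n * U ω⌋₊) θ ε ∩ H i) ≤ ENNReal.ofReal ε' * P (H i) :=
    fun i _ ↦ eventually_measure_bad_floor_inter_le hk' (hcs _ (hHG i)) (zpow_pos (by linarith) i)
      hθ (min_le_right _ _) (by linarith [min_le_left (δ / 4) 1]) (min_le_left _ _)
      fun ω hω ↦ ⟨hω.1, by rw [← zpow_add_one₀ (by linarith)]; exact hω.2.le⟩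
  refine ⟨θ, hθ, ?_⟩
  filter_upwards [(eventually_all_finset s).mpr hslab] with n hn
  calc P (Bad X (fun ω ↦ ⌊k n * U ω⌋₊) θ ε)
      ≤ ENNReal.ofReal ε' + ENNReal.ofReal (η / 2) := measure_le_add_of_inter_le_mul
        (fun i ↦ hG _ (hHG i)) (pairwise_disjoint_preimage_Ico_zpow U (by linarith)) hn hs.le
    _ ≤ ENNReal.ofReal (η / 2) + ENNReal.ofReal (η / 2) := by gcongr; exact min_le_right _ _
    _ = ENNReal.ofReal η := by rw [← ENNReal.ofReal_add (by positivity) (by positivity), add_halves]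

/-- condition (c*) implies condition (e), for `U > 0` `G`-measurable. -/
theorem stmt8 {Ω S : Type*} [mΩ : MeasurableSpace Ω] [MetricSpace S]
    [TopologicalSpace.SeparableSpace S]
    (P : Measure Ω) [IsProbabilityMeasure P]
    (G : MeasurableSpace Ω) (hG : G ≤ mΩ)
    (X : ℕ → Ω → S) (k : ℕ → ℝ) (U : Ω → ℝ)
    (hk : ∀ n, 0 < k n) (hk' : Tendsto k atTop atTop)
    (hU : ∀ ω, 0 < U ω) (hUm : Measurable[G] U)
    (hcstar : ∀ ε > (0:ℝ), ∃ δ > (0:ℝ), ∀ H : Set Ω, MeasurableSet[G] H → 0 < P H →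
      Filter.limsup (fun n => P (Bad X (fun _ => n) δ ε ∩ H) / P H) atTop
        < ENNReal.ofReal ε) :
    FlucIdx P X (fun n ω => ⌊k n * U ω⌋₊) :=
  stmt8_general (mΩ := mΩ) P G hG X k U hk' hU hUm hcstar
end

section
/- In the setting of the previous counterexample (X_n = 1_{A_n} with A_n = [log n, log(n+1)) mod 1 on [0,1) with Lebesgue measure), for every ε > 0 and δ ∈ (0,1): limsup_n P(M_n(δ) > ε) ≤ log((1+δ)/(1−δ)); in particular condition (c) holds: inf_{δ>0} limsup_n P(M_n(δ) > ε) = 0. -/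
open MeasureTheory ProbabilityTheory Filter Real Topology Set

/-- `A_n = [log n, log (n+1))` taken modulo `1`, as a subset of `[0,1)`. -/
def Amod (n : ℕ) : Set ℝ :=
  {x | x ∈ Set.Ico (0:ℝ) 1 ∧ ∃ m : ℤ, Real.log n ≤ x + m ∧ x + m < Real.log (n + 1)}

/-- `X_n = 1_{A_n}`, `X_0 = 0`. -/
noncomputable def Xmod : ℕ → ℝ → ℝ := fun n x =>
  if n = 0 then 0 else (Amod n).indicator (fun _ => (1:ℝ)) x

/-!
`A_n` is the image under `Int.fract` of the interval `[log n, log (n + 1))`, and `Int.fract`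
does not increase Lebesgue measure, since it translates each piece `s ∩ [m, m + 1)` into `[0, 1)`.
If `M_n(δ) > ε ≥ 0` at `x`, then `x ∈ A_j` for some `j ≥ 1` with `|n - j| ≤ n δ`, so `x` lies in
the image under `Int.fract` of `[log (n (1 - δ)), log (n (1 + δ) + 1))`, an interval of length
`log ((1 + δ + 1/n) / (1 - δ)) → log ((1 + δ) / (1 - δ))`. The latter bound tends to `0` with `δ`.
-/

theorem volume_image_fract_le {s : Set ℝ} (hs : MeasurableSet s) :
    volume (Int.fract '' s) ≤ volume s := by
  have hpiece (m : ℤ) :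
      (fun x : ℝ => x - m) '' s ∩ Ico 0 1 = (· + (m : ℝ)) ⁻¹' (s ∩ Ico (m : ℝ) (m + 1)) := by
    ext x
    simp only [mem_inter_iff, mem_image, mem_preimage, mem_Ico, sub_eq_iff_eq_add]
    constructor
    · rintro ⟨⟨y, hy, rfl⟩, h0, h1⟩
      exact ⟨hy, by linarith, by linarith⟩
    · rintro ⟨hy, h0, h1⟩
      exact ⟨⟨_, hy, rfl⟩, by linarith, by linarith⟩
  calc volume (Int.fract '' s)
      ≤ ∑' m : ℤ, volume ((fun x : ℝ => x - m) '' s ∩ Ico 0 1) := by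
        rw [Int.image_fract]; exact measure_iUnion_le _
    _ = ∑' m : ℤ, volume (s ∩ Ico (m : ℝ) (m + 1)) := by
        simp only [hpiece, measure_preimage_add_right]
    _ = volume s := by
        rw [← measure_iUnion, ← inter_iUnion, iUnion_Ico_intCast ℝ, inter_univ]
        · exact fun i j hij =>
            (pairwise_disjoint_Ico_intCast ℝ hij).mono inter_subset_right inter_subset_right
        · exact fun m => hs.inter measurableSet_Ico

theorem Amod_subset_image_fract (n : ℕ) : Amod n ⊆ Int.fract '' Ico (log n) (log (n + 1)) := by
  rintro x ⟨hx, m, hlo, hhi⟩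
  exact ⟨x + m, ⟨hlo, hhi⟩, by rw [Int.fract_add_intCast, Int.fract_eq_self.mpr hx]⟩

theorem ne_zero_and_mem_Amod_of_Xmod_ne_zero {k : ℕ} {x : ℝ} (h : Xmod k x ≠ 0) :
    k ≠ 0 ∧ x ∈ Amod k := by
  have hk : k ≠ 0 := by rintro rfl; simp [Xmod] at h
  exact ⟨hk, by_contra fun hx => h (by simp [Xmod, hk, hx])⟩

theorem Bad_Xmod_subset_image_fract {ε δ : ℝ} (hε : 0 ≤ ε) (hδ : δ < 1) {n : ℕ} (hn : n ≠ 0) :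
    Bad Xmod (fun _ => n) δ ε ⊆ Int.fract '' Ico (log (n * (1 - δ))) (log (n * (1 + δ) + 1)) := by
  rintro x ⟨j, hj, hdist⟩
  have hδ0 : 0 ≤ (n : ℝ) * δ := (abs_nonneg _).trans hj
  -- `0 ≤ ε < |X_j x - X_n x|`, so `X_j x` or `X_n x` is nonzero.
  obtain ⟨k, hkn, hk⟩ : ∃ k : ℕ, |(n : ℝ) - k| ≤ n * δ ∧ Xmod k x ≠ 0 := by
    by_cases hj0 : Xmod j x = 0
    · exact ⟨n, by simpa using hδ0, fun h => by simp [hj0, h] at hdist; linarith⟩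
    · exact ⟨j, hj, hj0⟩
  obtain ⟨hk0, hx⟩ := ne_zero_and_mem_Amod_of_Xmod_ne_zero hk
  obtain ⟨y, ⟨hy₁, hy₂⟩, rfl⟩ := Amod_subset_image_fract k hx
  have hn' : (0 : ℝ) < n := by positivity
  have hk' : (0 : ℝ) < k := by positivity
  rw [abs_le] at hkn
  refine ⟨y, ⟨le_trans ?_ hy₁, hy₂.trans_le ?_⟩, rfl⟩
  · exact log_le_log (by nlinarith) (by linarith)
  · exact log_le_log (by positivity) (by linarith)

theorem volume_Bad_Xmod_le {ε δ : ℝ} (hε : 0 ≤ ε) (hδ₀ : 0 ≤ δ) (hδ : δ < 1) {n : ℕ}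
    (hn : n ≠ 0) :
    volume.restrict (Ico (0 : ℝ) 1) (Bad Xmod (fun _ => n) δ ε)
      ≤ ENNReal.ofReal (log ((1 + δ + (n : ℝ)⁻¹) / (1 - δ))) := by
  have hn' : (0 : ℝ) < n := by positivity
  have hlen :
      log (n * (1 + δ) + 1) - log (n * (1 - δ)) = log ((1 + δ + (n : ℝ)⁻¹) / (1 - δ)) := by
    rw [← log_div (by positivity) (by nlinarith)]
    congr 1
    field_simp
  calc volume.restrict (Ico (0 : ℝ) 1) (Bad Xmod (fun _ => n) δ ε)
      ≤ volume (Int.fract '' Ico (log (n * (1 - δ))) (log (n * (1 + δ) + 1))) :=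
        (Measure.restrict_le_self _).trans (measure_mono (Bad_Xmod_subset_image_fract hε hδ hn))
    _ ≤ volume (Ico (log (n * (1 - δ))) (log (n * (1 + δ) + 1))) :=
        volume_image_fract_le measurableSet_Ico
    _ = ENNReal.ofReal (log ((1 + δ + (n : ℝ)⁻¹) / (1 - δ))) := by
        rw [Real.volume_Ico, hlen]

theorem limsup_volume_Bad_Xmod_le {ε δ : ℝ} (hε : 0 ≤ ε) (hδ₀ : 0 ≤ δ) (hδ : δ < 1) :
    limsup (fun n => volume.restrict (Ico (0 : ℝ) 1) (Bad Xmod (fun _ => n) δ ε)) atTop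
      ≤ ENNReal.ofReal (log ((1 + δ) / (1 - δ))) := by
  have hbound : Tendsto (fun n : ℕ => ENNReal.ofReal (log ((1 + δ + (n : ℝ)⁻¹) / (1 - δ))))
      atTop (𝓝 (ENNReal.ofReal (log ((1 + δ) / (1 - δ))))) := by
    have hinv := tendsto_inv_atTop_zero.comp (tendsto_natCast_atTop_atTop (R := ℝ))
    have := (((tendsto_const_nhds (x := 1 + δ)).add hinv).div_const (1 - δ)).log
      (by rw [add_zero]; exact (div_pos (by linarith) (by linarith)).ne')
    simpa using ENNReal.tendsto_ofReal this
  rw [← hbound.limsup_eq]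
  exact limsup_le_limsup (eventually_atTop.mpr ⟨1, fun n hn =>
    volume_Bad_Xmod_le hε hδ₀ hδ (Nat.one_le_iff_ne_zero.mp hn)⟩)

theorem tendsto_ofReal_log_one_add_div_one_sub :
    Tendsto (fun δ : ℝ => ENNReal.ofReal (log ((1 + δ) / (1 - δ)))) (𝓝 0) (𝓝 0) := by
  have hid := tendsto_id (x := 𝓝 (0 : ℝ))
  have := (((tendsto_const_nhds (x := (1 : ℝ))).add hid).div
    ((tendsto_const_nhds (x := (1 : ℝ))).sub hid) (by norm_num)).log (by norm_num)
  simpa using ENNReal.tendsto_ofReal this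

/-- for the concrete counterexample sequence,
`limsup_n P(M_n(δ) > ε) ≤ log((1+δ)/(1-δ))`; in particular condition (c) holds. -/
theorem stmt10 :
    (∀ ε > (0:ℝ), ∀ δ : ℝ, 0 < δ → δ < 1 →
      Filter.limsup
        (fun n => (volume.restrict (Set.Ico (0:ℝ) 1)) (Bad Xmod (fun _ => n) δ ε)) atTop
        ≤ ENNReal.ofReal (Real.log ((1 + δ) / (1 - δ)))) ∧
    FlucIdx (volume.restrict (Set.Ico (0:ℝ) 1)) Xmod (fun n _ => n) := by
  refine ⟨fun ε hε δ hδ₀ hδ => limsup_volume_Bad_Xmod_le hε.le hδ₀.le hδ, fun ε hε => ?_⟩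
  refine le_antisymm (ge_of_tendsto
    (tendsto_ofReal_log_one_add_div_one_sub.mono_left (nhdsWithin_le_nhds (s := Ioi 0))) ?_)
    bot_le
  filter_upwards [Ioo_mem_nhdsGT (zero_lt_one' ℝ)] with δ ⟨hδ₀, hδ⟩
  exact iInf_le_of_le ⟨δ, hδ₀⟩ (limsup_volume_Bad_Xmod_le hε.le hδ₀.le hδ)
end

section
/- Let Z_n = U·V_n with U > 0 independent of the i.i.d. N(0,1) sequence (V_n), and X_n = (Σ_{i=1}^n Z_i)/√n. Suppose P(U > u) > 0 for all u > 0. Then for every δ ∈ (0, 1/2) there exists u > 0 and infinitely many n such that P(M_n(2δ) > 1/2 | U > u) ≥ 2·Φ(−1/(u·f(δ))), where f(δ) = 2√(2 − 2√(1−δ)) and Φ is the standard normal CDF; consequently, condition (c*) with respect to G = σ(U) fails: it is not true that for ε = 1/2 there exists δ > 0 with limsup_n P(M_n(δ) > 1/2 | H) < 1/2 for all H ∈ σ(U) with P(H) > 0. -/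
/-!
For `m ≤ n`, `X_m - X_n = U · W` with `W = S_m/√m - S_n/√n`, where `S_k = V_1 + ⋯ + V_k`. As a
linear combination of the `V_i`, `W` is centred Gaussian with variance `2 - 2√(m/n)`, and it is
independent of `U`. With `m = ⌊(1 - δ)n⌋` we have `|n - m| ≤ 2δn` and the variance is at least
`2 - 2√(1 - δ) = f(δ)²/4`, so
`P(M_n(2δ) > 1/2, U > u) ≥ P(|W| ≥ 1/(2u)) P(U > u) ≥ 2Φ(-1/(u f(δ))) P(U > u)`.
As `u → ∞` the bound tends to `2Φ(0) = 1`; hence for any `δ`, the event `{U > u} ∈ σ(U)` with `u`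
large has conditional `limsup_n P(M_n(δ) > 1/2 | U > u) ≥ 1/2`, contradicting (c*).
-/

open MeasureTheory ProbabilityTheory Filter Real Topology Set

open scoped NNReal ENNReal

namespace ProbabilityTheory

variable {Ω ι : Type*} {mΩ : MeasurableSpace Ω} {P : Measure Ω} [IsProbabilityMeasure P]

lemma iIndepFun.map_sum_eq_gaussianReal {W : ι → Ω → ℝ} (hW : iIndepFun W P)
    (hmeas : ∀ i, Measurable (W i)) {μ : ι → ℝ} {v : ι → ℝ≥0}
    (hlaw : ∀ i, P.map (W i) = gaussianReal (μ i) (v i)) (s : Finset ι) :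
    P.map (∑ i ∈ s, W i) = gaussianReal (∑ i ∈ s, μ i) (∑ i ∈ s, v i) := by
  classical
  induction s using Finset.induction_on with
  | empty => simp [gaussianReal_zero_var, Pi.zero_def]
  | insert j s hj ih =>
    rw [Finset.sum_insert hj, Finset.sum_insert hj, Finset.sum_insert hj, add_comm (W j),
      add_comm (μ j), add_comm (v j)]
    exact gaussianReal_add_gaussianReal_of_indepFun
      (hW.indepFun_finsetSum_of_notMem hmeas hj) ih (hlaw j)

lemma iIndepFun.map_sum_mul_eq_gaussianReal {V : ι → Ω → ℝ} (hV : iIndepFun V P)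
    (hmeas : ∀ i, Measurable (V i)) (hlaw : ∀ i, P.map (V i) = gaussianReal 0 1)
    (a : ι → ℝ) (s : Finset ι) :
    P.map (fun ω => ∑ i ∈ s, a i * V i ω) = gaussianReal 0 (∑ i ∈ s, ‖a i‖₊ ^ 2) := by
  have hlaw' (i : ι) : P.map (fun ω => a i * V i ω) = gaussianReal 0 (‖a i‖₊ ^ 2) := by
    rw [show (fun ω => a i * V i ω) = (a i * ·) ∘ V i from rfl,
      ← Measure.map_map (measurable_const_mul _) (hmeas i), hlaw i,
      gaussianReal_map_const_mul]
    congr 1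
    · simp
    · ext; simp
  have h := (hV.comp (fun i x => a i * x) fun i => measurable_const_mul _).map_sum_eq_gaussianReal
    (fun i => (hmeas i).const_mul _) hlaw' s
  rw [Finset.sum_const_zero] at h
  convert h using 2
  ext ω
  simp [Finset.sum_apply]

lemma tendsto_cdf_nhdsLT {μ : Measure ℝ} [IsProbabilityMeasure μ] {x : ℝ} (hx : μ {x} = 0) :
    Tendsto (cdf μ) (𝓝[<] x) (𝓝 (cdf μ x)) := by
  have hsingleton := (cdf μ).measure_singleton x
  rw [measure_cdf, hx, eq_comm, ENNReal.ofReal_eq_zero, sub_nonpos] at hsingleton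
  have hleft : Function.leftLim (cdf μ) x = cdf μ x :=
    le_antisymm ((cdf μ).mono.leftLim_le le_rfl) hsingleton
  simpa [hleft] using (cdf μ).mono.tendsto_leftLim x

lemma gaussianReal_singleton {m : ℝ} {v : ℝ≥0} (hv : v ≠ 0) (x : ℝ) :
    gaussianReal m v {x} = 0 :=
  gaussianReal_absolutelyContinuous m hv Real.volume_singleton

lemma gaussianReal_Iic {v : ℝ≥0} (hv : v ≠ 0) (t : ℝ) :
    gaussianReal 0 v (Iic t) = ENNReal.ofReal (cdf (gaussianReal 0 1) (t / √v)) := by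
  have hσ : 0 < √(v : ℝ) := Real.sqrt_pos.mpr (by positivity)
  have hscale : (gaussianReal 0 1).map (√(v : ℝ) * ·) = gaussianReal 0 v := by
    rw [gaussianReal_map_const_mul]
    congr 1
    · simp
    · ext; simp
  have hpre : (√(v : ℝ) * ·) ⁻¹' Iic t = Iic (t / √v) := by
    ext x
    simp [le_div_iff₀ hσ, mul_comm]
  rw [← hscale, Measure.map_apply (measurable_const_mul _) measurableSet_Iic, hpre, ofReal_cdf]

lemma gaussianReal_Ici_eq_Iic_neg {v : ℝ≥0} (t : ℝ) :
    gaussianReal 0 v (Ici t) = gaussianReal 0 v (Iic (-t)) := by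
  conv_lhs => rw [← neg_zero, ← gaussianReal_map_neg]
  rw [Measure.map_apply measurable_neg measurableSet_Ici]
  congr 1
  ext x
  simp

lemma gaussianReal_setOf_le_abs {v : ℝ≥0} (hv : v ≠ 0) {c : ℝ} (hc : 0 < c) :
    gaussianReal 0 v {x | c ≤ |x|} = ENNReal.ofReal (2 * cdf (gaussianReal 0 1) (-c / √v)) := by
  have hsplit : {x : ℝ | c ≤ |x|} = Iic (-c) ∪ Ici c := by
    ext x
    simp only [mem_ofPred_eq, mem_union, mem_Iic, mem_Ici, le_abs', or_comm]
  have hdisj : Disjoint (Iic (-c)) (Ici c) :=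
    Iic_disjoint_Ici.mpr (by linarith)
  rw [hsplit, measure_union hdisj measurableSet_Ici, gaussianReal_Ici_eq_Iic_neg,
    gaussianReal_Iic hv, ← two_mul, ENNReal.ofReal_mul zero_le_two, ENNReal.ofReal_ofNat]

lemma cdf_gaussianReal_zero {v : ℝ≥0} (hv : v ≠ 0) : cdf (gaussianReal 0 v) 0 = 1 / 2 := by
  have hcompl := measure_add_measure_compl (μ := gaussianReal 0 v) (measurableSet_Iic (a := 0))
  rw [compl_Iic, measure_univ, measure_congr (Ioi_ae_eq_Ici' (gaussianReal_singleton hv 0)),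
    gaussianReal_Ici_eq_Iic_neg, neg_zero, ← two_mul] at hcompl
  rw [cdf_eq_real, measureReal_def]
  have := congrArg ENNReal.toReal hcompl
  rw [ENNReal.toReal_mul] at this
  norm_num at this
  linarith

lemma eventually_quarter_lt_cdf_gaussianReal {f : ℝ} (hf : 0 < f) :
    ∀ᶠ u in atTop, 1 / 4 < cdf (gaussianReal 0 1) (-(1 / (u * f))) := by
  have hlim : Tendsto (fun u : ℝ => -(1 / (u * f))) atTop (𝓝[<] 0) := by
    refine tendsto_nhdsWithin_iff.mpr ⟨?_, ?_⟩
    · simpa using ((tendsto_id.atTop_mul_const hf).inv_tendsto_atTop).neg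
    · filter_upwards [eventually_gt_atTop 0] with u hu
      simp only [mem_Iio, Left.neg_neg_iff]
      positivity
  refine ((tendsto_cdf_nhdsLT (gaussianReal_singleton one_ne_zero 0)).comp hlim).eventually
    (lt_mem_nhds ?_)
  rw [cdf_gaussianReal_zero one_ne_zero]
  norm_num

end ProbabilityTheory

lemma Finset.sum_Icc_one_ite_le {M : Type*} [AddCommMonoid M] {m n : ℕ} (hmn : m ≤ n)
    (f : ℕ → M) : ∑ i ∈ Finset.Icc 1 n, (if i ≤ m then f i else 0) = ∑ i ∈ Finset.Icc 1 m, f i := by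
  rw [← Finset.sum_filter]
  congr 1
  ext i
  simp only [Finset.mem_filter, Finset.mem_Icc]
  omega

lemma exists_nat_near_one_sub_mul {δ : ℝ} (hδ : δ < 1 / 2) {n : ℕ} (hn : 1 ≤ δ * n) :
    ∃ m : ℕ, 0 < m ∧ m ≤ n ∧ (m / n : ℝ) ≤ 1 - δ ∧ |(n : ℝ) - m| ≤ n * (2 * δ) := by
  have hn' : (0 : ℝ) < n := by nlinarith
  refine ⟨⌊(1 - δ) * n⌋₊, ?_, ?_, ?_, ?_⟩
  · exact Nat.floor_pos.mpr (by nlinarith)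
  · exact Nat.floor_le_of_le (by nlinarith)
  · rw [div_le_iff₀ hn']
    exact Nat.floor_le (by nlinarith)
  · have hlt := Nat.lt_floor_add_one ((1 - δ) * n)
    have hle := Nat.floor_le (show 0 ≤ (1 - δ) * n by nlinarith)
    rw [abs_of_nonneg (by nlinarith)]
    nlinarith

lemma two_sub_two_mul_sqrt_one_sub_pos {δ : ℝ} (hδ : 0 < δ) : 0 < 2 - 2 * √(1 - δ) := by
  have : √(1 - δ) < 1 := (Real.sqrt_lt' one_pos).mpr (by linarith)
  linarith

lemma bad_subset_bad_of_le {Ω S : Type*} [PseudoMetricSpace S] (X : ℕ → Ω → S) (R : Ω → ℕ)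
    {δ₁ δ₂ : ℝ} (h : δ₁ ≤ δ₂) (ε : ℝ) : Bad X R δ₁ ε ⊆ Bad X R δ₂ ε := by
  rintro ω ⟨j, hj, hdist⟩
  exact ⟨j, hj.trans (by gcongr), hdist⟩

section Model

variable {Ω : Type*} {mΩ : MeasurableSpace Ω} {P : Measure Ω}
  {U : Ω → ℝ} {V : ℕ → Ω → ℝ} {X : ℕ → Ω → ℝ}

noncomputable def normalizedSumDiff (V : ℕ → Ω → ℝ) (m n : ℕ) (ω : Ω) : ℝ :=
  (∑ i ∈ Finset.Icc 1 m, V i ω) / √m - (∑ i ∈ Finset.Icc 1 n, V i ω) / √n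

lemma normalizedSumDiff_eq_sum {m n : ℕ} (hmn : m ≤ n) (ω : Ω) :
    normalizedSumDiff V m n ω
      = ∑ i ∈ Finset.Icc 1 n, ((if i ≤ m then 1 / √m else 0) - 1 / √n) * V i ω := by
  simp only [sub_mul, ite_mul, zero_mul, Finset.sum_sub_distrib, Finset.sum_Icc_one_ite_le hmn,
    ← Finset.mul_sum, normalizedSumDiff]
  ring

lemma map_normalizedSumDiff [IsProbabilityMeasure P] (hindep : iIndepFun V P)
    (hmeas : ∀ i, Measurable (V i)) (hgauss : ∀ i, P.map (V i) = gaussianReal 0 1)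
    {m n : ℕ} (hm : 0 < m) (hmn : m ≤ n) :
    P.map (normalizedSumDiff V m n) = gaussianReal 0 (2 - 2 * √(m / n)).toNNReal := by
  have hm' : (0 : ℝ) < m := by exact_mod_cast hm
  have hn' : (0 : ℝ) < n := by exact_mod_cast hm.trans_le hmn
  have hsq (i : ℕ) : ((if i ≤ m then 1 / √m else 0) - 1 / √n) ^ 2
      = (if i ≤ m then 1 / m - 2 / (√m * √n) else 0) + 1 / n := by
    split_ifs
    · rw [sub_sq, div_pow, div_pow, Real.sq_sqrt hm'.le, Real.sq_sqrt hn'.le]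
      ring
    · rw [zero_sub, neg_sq, div_pow, Real.sq_sqrt hn'.le, one_pow, zero_add]
  have hvar : ∑ i ∈ Finset.Icc 1 n, ((if i ≤ m then 1 / √m else 0) - 1 / √n) ^ 2
      = 2 - 2 * √(m / n) := by
    simp only [hsq, Finset.sum_add_distrib, Finset.sum_Icc_one_ite_le hmn, Finset.sum_const,
      Nat.card_Icc, add_tsub_cancel_right, nsmul_eq_mul]
    rw [Real.sqrt_div hm'.le]
    field_simp
    linear_combination 2 * Real.sq_sqrt hm'.le
  rw [funext (normalizedSumDiff_eq_sum hmn), hindep.map_sum_mul_eq_gaussianReal hmeas hgauss]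
  congr 1
  ext
  rw [NNReal.coe_sum, ← hvar, Real.coe_toNNReal _ (by positivity)]
  simp

lemma indepFun_normalizedSumDiff (hUV : IndepFun U (fun ω i => V i ω) P) (m n : ℕ) :
    IndepFun U (normalizedSumDiff V m n) P := by
  refine hUV.comp (φ := id) (ψ := fun p : ℕ → ℝ =>
    (∑ i ∈ Finset.Icc 1 m, p i) / √m - (∑ i ∈ Finset.Icc 1 n, p i) / √n) measurable_id ?_
  fun_prop

lemma sub_eq_mul_normalizedSumDiff
    (hX : ∀ n ω, X n ω = (∑ i ∈ Finset.Icc 1 n, U ω * V i ω) / √n) (m n : ℕ) (ω : Ω) :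
    X m ω - X n ω = U ω * normalizedSumDiff V m n ω := by
  simp only [hX, ← Finset.mul_sum, normalizedSumDiff]
  ring

lemma inter_subset_bad
    (hX : ∀ n ω, X n ω = (∑ i ∈ Finset.Icc 1 n, U ω * V i ω) / √n)
    {m n : ℕ} {δ u : ℝ} (hu : 0 < u) (hmn : |(n : ℝ) - m| ≤ n * δ) :
    {ω | 1 / (2 * u) ≤ |normalizedSumDiff V m n ω|} ∩ {ω | u < U ω}
      ⊆ Bad X (fun _ => n) δ (1 / 2) ∩ {ω | u < U ω} := by
  rintro ω ⟨hW, hU⟩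
  refine ⟨⟨m, hmn, ?_⟩, hU⟩
  simp only [mem_ofPred_eq] at hW hU
  rw [Real.dist_eq, sub_eq_mul_normalizedSumDiff hX, abs_mul, abs_of_pos (hu.trans hU)]
  calc (1 : ℝ) / 2 = u * (1 / (2 * u)) := by field_simp
    _ < U ω * |normalizedSumDiff V m n ω| := mul_lt_mul hU hW (by positivity) (hu.trans hU).le

lemma two_mul_cdf_mul_le_measure_bad [IsProbabilityMeasure P] (hmeas : ∀ i, Measurable (V i))
    (hindep : iIndepFun V P) (hgauss : ∀ i, P.map (V i) = gaussianReal 0 1)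
    (hUV : IndepFun U (fun ω i => V i ω) P)
    (hX : ∀ n ω, X n ω = (∑ i ∈ Finset.Icc 1 n, U ω * V i ω) / √n)
    {δ u : ℝ} (hδ : δ < 1 / 2) (hu : 0 < u) {n : ℕ} (hn : 1 ≤ δ * n) :
    ENNReal.ofReal (2 * cdf (gaussianReal 0 1) (-(1 / (u * (2 * √(2 - 2 * √(1 - δ)))))))
        * P {ω | u < U ω}
      ≤ P (Bad X (fun _ => n) (2 * δ) (1 / 2) ∩ {ω | u < U ω}) := by
  obtain ⟨m, hm, hmn, hratio, hdist⟩ := exists_nat_near_one_sub_mul hδ hn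
  set v := (2 - 2 * √(m / n : ℝ)).toNNReal
  have hδ0 : 0 < δ := pos_of_mul_pos_left (one_pos.trans_le hn) n.cast_nonneg
  have hgap := two_sub_two_mul_sqrt_one_sub_pos hδ0
  have hv : 2 - 2 * √(1 - δ) ≤ v :=
    (by gcongr : 2 - 2 * √(1 - δ) ≤ 2 - 2 * √(m / n : ℝ)).trans (Real.le_coe_toNNReal _)
  have hv0 : v ≠ 0 := by
    rw [← NNReal.coe_ne_zero]
    linarith
  have hthreshold : -(1 / (u * (2 * √(2 - 2 * √(1 - δ))))) ≤ -(1 / (2 * u)) / √v := by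
    have : √(2 - 2 * √(1 - δ)) ≤ √v := Real.sqrt_le_sqrt hv
    rw [neg_div, neg_le_neg_iff, div_div]
    apply one_div_le_one_div_of_le (by positivity)
    nlinarith
  have hWmeas : Measurable (normalizedSumDiff V m n) := by
    unfold normalizedSumDiff
    fun_prop
  calc ENNReal.ofReal (2 * cdf (gaussianReal 0 1) (-(1 / (u * (2 * √(2 - 2 * √(1 - δ)))))))
        * P {ω | u < U ω}
      ≤ ENNReal.ofReal (2 * cdf (gaussianReal 0 1) (-(1 / (2 * u)) / √v)) * P {ω | u < U ω} := by
        gcongr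
    _ = P (U ⁻¹' Ioi u) * P (normalizedSumDiff V m n ⁻¹' {x | 1 / (2 * u) ≤ |x|}) := by
        rw [← gaussianReal_setOf_le_abs hv0 (by positivity),
          ← map_normalizedSumDiff hindep hmeas hgauss hm hmn,
          Measure.map_apply hWmeas (measurableSet_le measurable_const measurable_abs), mul_comm]
        rfl
    _ = P ({ω | 1 / (2 * u) ≤ |normalizedSumDiff V m n ω|} ∩ {ω | u < U ω}) := by
        rw [← (indepFun_normalizedSumDiff hUV m n).measure_inter_preimage_eq_mul _ _
          measurableSet_Ioi (measurableSet_le measurable_const measurable_abs), inter_comm]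
        rfl
    _ ≤ P (Bad X (fun _ => n) (2 * δ) (1 / 2) ∩ {ω | u < U ω}) :=
        measure_mono (inter_subset_bad hX hu hdist)

lemma eventually_two_mul_cdf_le_measure_bad_div [IsProbabilityMeasure P]
    (hmeas : ∀ i, Measurable (V i)) (hindep : iIndepFun V P)
    (hgauss : ∀ i, P.map (V i) = gaussianReal 0 1)
    (hUV : IndepFun U (fun ω i => V i ω) P)
    (hX : ∀ n ω, X n ω = (∑ i ∈ Finset.Icc 1 n, U ω * V i ω) / √n)
    {δ u : ℝ} (hδ0 : 0 < δ) (hδ : δ < 1 / 2) (hu : 0 < u) (hUu : 0 < P {ω | u < U ω}) :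
    ∀ᶠ n in atTop,
      ENNReal.ofReal (2 * cdf (gaussianReal 0 1) (-(1 / (u * (2 * √(2 - 2 * √(1 - δ)))))))
        ≤ P (Bad X (fun _ => n) (2 * δ) (1 / 2) ∩ {ω | u < U ω}) / P {ω | u < U ω} := by
  filter_upwards [tendsto_natCast_atTop_atTop.eventually_ge_atTop (1 / δ)] with n hn
  rw [ENNReal.le_div_iff_mul_le (Or.inl hUu.ne') (Or.inl (measure_ne_top _ _))]
  exact two_mul_cdf_mul_le_measure_bad hmeas hindep hgauss hUV hX hδ hu
    (by rwa [div_le_iff₀ hδ0, mul_comm] at hn)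

end Model

theorem stmt13_general {Ω : Type*} [mΩ : MeasurableSpace Ω] (P : Measure Ω) [IsProbabilityMeasure P]
    (U : Ω → ℝ) (V : ℕ → Ω → ℝ)
    (hUtail : ∀ u > (0:ℝ), 0 < P {ω | u < U ω})
    (hmeas : ∀ i, Measurable (V i))
    (hindep : iIndepFun V P)
    (hgauss : ∀ i, Measure.map (V i) P = gaussianReal 0 1)
    (hUV : IndepFun U (fun ω i => V i ω) P)
    (X : ℕ → Ω → ℝ)
    (hX : ∀ n ω, X n ω = (∑ i ∈ Finset.Icc 1 n, U ω * V i ω) / Real.sqrt n) :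
    (∀ δ : ℝ, 0 < δ → δ < 1/2 → ∃ u > (0:ℝ), ∃ᶠ n in atTop,
        ENNReal.ofReal (2 * ProbabilityTheory.cdf (gaussianReal 0 1)
            (-(1 / (u * (2 * Real.sqrt (2 - 2 * Real.sqrt (1 - δ)))))))
          ≤ P (Bad X (fun _ => n) (2 * δ) (1/2) ∩ {ω | u < U ω}) / P {ω | u < U ω}) ∧
    ¬ (∃ δ > (0:ℝ), ∀ H : Set Ω,
        MeasurableSet[MeasurableSpace.comap U inferInstance] H → 0 < P H →
        Filter.limsup (fun n => P (Bad X (fun _ => n) δ (1/2) ∩ H) / P H) atTop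
          < ENNReal.ofReal (1/2)) := by
  have hbound {δ u : ℝ} (hδ0 : 0 < δ) (hδ : δ < 1 / 2) (hu : 0 < u) :=
    eventually_two_mul_cdf_le_measure_bad_div hmeas hindep hgauss hUV hX hδ0 hδ hu (hUtail u hu)
  refine ⟨fun δ hδ0 hδ => ⟨1, one_pos, (hbound hδ0 hδ one_pos).frequently⟩, ?_⟩
  rintro ⟨δ, hδ0, hcond⟩
  obtain ⟨δ', hδ'0, hδ', h2δ'⟩ : ∃ δ', 0 < δ' ∧ δ' < 1 / 2 ∧ 2 * δ' ≤ δ :=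
    ⟨min δ 1 / 4, by positivity, by linarith [min_le_right δ 1], by linarith [min_le_left δ 1]⟩
  have hf : 0 < 2 * √(2 - 2 * √(1 - δ')) :=
    mul_pos two_pos (Real.sqrt_pos.mpr (two_sub_two_mul_sqrt_one_sub_pos hδ'0))
  obtain ⟨u, hΦ, hu⟩ :=
    ((eventually_quarter_lt_cdf_gaussianReal hf).and (eventually_gt_atTop 0)).exists
  refine (hcond {ω | u < U ω} ⟨Ioi u, measurableSet_Ioi, rfl⟩ (hUtail u hu)).not_ge ?_
  refine le_limsup_of_frequently_le ((hbound hδ'0 hδ' hu).mono fun n hn => ?_).frequently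
    (isBoundedUnder_of ⟨⊤, fun _ => le_top⟩)
  calc ENNReal.ofReal (1 / 2) ≤ _ := ENNReal.ofReal_le_ofReal (by linarith)
    _ ≤ _ := hn
    _ ≤ _ := by gcongr; exact bad_subset_bad_of_le X _ h2δ' _

/-- in the exchangeable CLT example `Z_n = U·V_n`, the conditional
probability bound `P(M_n(2δ) > 1/2 | U > u) ≥ 2Φ(−1/(u f(δ)))` holds for infinitely
many `n`, and consequently condition (c*) with respect to `G = σ(U)` fails. -/
theorem stmt13 {Ω : Type*} [mΩ : MeasurableSpace Ω] (P : Measure Ω) [IsProbabilityMeasure P]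
    (U : Ω → ℝ) (V : ℕ → Ω → ℝ)
    (hU : ∀ ω, 0 < U ω) (hUmeas : Measurable U)
    (hU2 : Integrable (fun ω => U ω ^ 2) P)
    (hUtail : ∀ u > (0:ℝ), 0 < P {ω | u < U ω})
    (hmeas : ∀ i, Measurable (V i))
    (hindep : iIndepFun V P)
    (hgauss : ∀ i, Measure.map (V i) P = gaussianReal 0 1)
    (hUV : IndepFun U (fun ω i => V i ω) P)
    (X : ℕ → Ω → ℝ)
    (hX : ∀ n ω, X n ω = (∑ i ∈ Finset.Icc 1 n, U ω * V i ω) / Real.sqrt n) :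
    (∀ δ : ℝ, 0 < δ → δ < 1/2 → ∃ u > (0:ℝ), ∃ᶠ n in atTop,
        ENNReal.ofReal (2 * ProbabilityTheory.cdf (gaussianReal 0 1)
            (-(1 / (u * (2 * Real.sqrt (2 - 2 * Real.sqrt (1 - δ)))))))
          ≤ P (Bad X (fun _ => n) (2 * δ) (1/2) ∩ {ω | u < U ω}) / P {ω | u < U ω}) ∧
    ¬ (∃ δ > (0:ℝ), ∀ H : Set Ω,
        MeasurableSet[MeasurableSpace.comap U inferInstance] H → 0 < P H →
        Filter.limsup (fun n => P (Bad X (fun _ => n) δ (1/2) ∩ H) / P H) atTop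
          < ENNReal.ofReal (1/2)) :=
  stmt13_general (mΩ := mΩ) P U V hUtail hmeas hindep hgauss hUV X hX
end

section
/- If (Z_n) is i.i.d. real-valued with E[Z_1²] < ∞, and X_n = (Σ_{i=1}^n (Z_i − E[Z_1]))/√n, then the fluctuation condition (c) holds: for every ε > 0, inf_{δ>0} limsup_n P(max_{j : |n−j| ≤ nδ} |X_j − X_n| > ε) = 0. -/
/-!
Write `S k = ∑ i < k, (Z (i + 1) - E[Z 1])` for the centred partial sums, so `X n = S n / √n`.
If `|j - n| ≤ nδ` with `δ ≤ 1/2`, then `|X j - X n| ≤ 2 (|S j - S n| + δ |S n|) / √n`. Hence the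
event `max_{|j - n| ≤ nδ} |X j - X n| > ε` forces either `|S j - S n| ≥ ε√n/4` for some `j` in the
window, which by Kolmogorov's maximal inequality (Doob's inequality for the submartingale `S k ^ 2`)
has probability `O(δ)`, or `|S n| ≥ ε√n/(4δ)`, which by Chebyshev has probability `O(δ²)`. Both
bounds are uniform in `n`, so the `limsup` is `O(δ)` and its infimum over `δ > 0` vanishes.
-/

open MeasureTheory ProbabilityTheory Filter Real Topology Set

lemma abs_sqrt_sub_sqrt_le {x y : ℝ} (hx : 0 ≤ x) (hy : 0 < y) :
    |√y - √x| ≤ |y - x| / √y := by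
  have hsy : 0 < √y := sqrt_pos.mpr hy
  rw [le_div_iff₀ hsy]
  calc |√y - √x| * √y ≤ |√y - √x| * (√y + √x) := by gcongr; linarith [sqrt_nonneg x]
    _ = |y - x| := by
      rw [← abs_of_nonneg (by positivity : 0 ≤ √y + √x), ← abs_mul]
      congr 1
      linear_combination sq_sqrt hy.le - sq_sqrt hx

lemma abs_div_sqrt_sub_div_sqrt_le {a b x y δ : ℝ} (hy : 0 < y) (hδ : δ ≤ 1 / 2)
    (hxy : |y - x| ≤ y * δ) :
    |a / √x - b / √y| ≤ 2 * (|a - b| + δ * |b|) / √y := by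
  have hyx : y ≤ 2 * x := by linarith [(abs_le.mp hxy).2, mul_le_mul_of_nonneg_left hδ hy.le]
  have hx : 0 < x := by linarith
  have hrx : 0 < √x := sqrt_pos.mpr hx
  have hry : 0 < √y := sqrt_pos.mpr hy
  have hyx' : √y ≤ 2 * √x := by nlinarith [sq_sqrt hx.le, sq_sqrt hy.le]
  have hδ0 : 0 ≤ δ := nonneg_of_mul_nonneg_right ((abs_nonneg _).trans hxy) hy
  have hsqrt : |√y - √x| ≤ δ * √y := by
    calc |√y - √x| ≤ |y - x| / √y := abs_sqrt_sub_sqrt_le hx.le hy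
      _ ≤ y * δ / √y := by gcongr
      _ = δ * √y := by
        field_simp
        rw [sq_sqrt hy.le, mul_comm]
  have hsplit : a / √x - b / √y = ((a - b) + b * (√y - √x) / √y) / √x := by
    field_simp; ring
  calc |a / √x - b / √y| ≤ (|a - b| + |b| * |√y - √x| / √y) / √x := by
        rw [hsplit, abs_div, abs_of_pos hrx]
        gcongr
        refine (abs_add_le _ _).trans ?_
        rw [abs_div, abs_mul, abs_of_pos hry]
    _ ≤ (|a - b| + δ * |b|) / √x := by
        gcongr
        rw [div_le_iff₀ hry]
        nlinarith [abs_nonneg b]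
    _ ≤ 2 * (|a - b| + δ * |b|) / √y := by
        rw [div_le_div_iff₀ hrx hry]
        nlinarith [abs_nonneg (a - b), abs_nonneg b, mul_nonneg hδ0 (abs_nonneg b)]

lemma Finset.sum_Icc_one_eq_sum_range {M : Type*} [AddCommMonoid M] (f : ℕ → M) (n : ℕ) :
    ∑ i ∈ Finset.Icc 1 n, f i = ∑ i ∈ Finset.range n, f (i + 1) := by
  rw [Finset.range_eq_Ico, Finset.sum_Ico_add']
  rfl

lemma le_add_floor_of_abs_sub_le {n j : ℕ} {r : ℝ} (h : |(n : ℝ) - j| ≤ r) :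
    n ≤ j + ⌊r⌋₊ ∧ j ≤ n + ⌊r⌋₊ := by
  have hr := Nat.lt_floor_add_one r
  obtain ⟨h1, h2⟩ := abs_le.mp h
  constructor
  · by_contra! hlt
    have : ((j + ⌊r⌋₊ + 1 : ℕ) : ℝ) ≤ n := by exact_mod_cast hlt
    push_cast at this
    linarith
  · by_contra! hlt
    have : ((n + ⌊r⌋₊ + 1 : ℕ) : ℝ) ≤ j := by exact_mod_cast hlt
    push_cast at this
    linarith

section Kolmogorov

variable {Ω : Type*} {mΩ : MeasurableSpace Ω} {P : Measure Ω} {V : ℕ → Ω → ℝ}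

def pastFiltration (V : ℕ → Ω → ℝ) (hV : ∀ i, Measurable (V i)) : Filtration ℕ mΩ where
  seq k := ⨆ i ∈ Iio k, MeasurableSpace.comap (V i) inferInstance
  mono' _ _ hkl := biSup_mono fun _ hi => lt_of_lt_of_le hi hkl
  le' _ := iSup₂_le fun i _ => (hV i).comap_le

lemma stronglyMeasurable_pastFiltration (hV : ∀ i, Measurable (V i)) {i k : ℕ} (hik : i < k) :
    StronglyMeasurable[pastFiltration V hV k] (V i) :=
  (comap_measurable (V i)).stronglyMeasurable.mono <|
    le_biSup (fun i => MeasurableSpace.comap (V i) inferInstance) hik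

lemma stronglyMeasurable_sum_range_pastFiltration (hV : ∀ i, Measurable (V i)) (k : ℕ) :
    StronglyMeasurable[pastFiltration V hV k] (∑ i ∈ Finset.range k, V i) :=
  Finset.stronglyMeasurable_sum _ fun _ hi =>
    stronglyMeasurable_pastFiltration hV (Finset.mem_range.mp hi)

lemma condExp_pastFiltration_ae_eq_zero [IsFiniteMeasure P] (hV : ∀ i, Measurable (V i))
    (hind : iIndepFun V P) {k : ℕ} (hmean : ∫ ω, V k ω ∂P = 0) :
    P[V k | pastFiltration V hV k] =ᵐ[P] 0 := by
  have hindep : Indep (MeasurableSpace.comap (V k) inferInstance) (pastFiltration V hV k) P := by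
    have := indep_iSup_of_disjoint (S := {k}) (T := Iio k) (fun i => (hV i).comap_le)
      hind.iIndep (Set.disjoint_singleton_left.mpr (lt_irrefl k))
    rwa [iSup_singleton] at this
  simpa [hmean, Pi.zero_def] using condExp_indep_eq (hV k).comap_le
    ((pastFiltration V hV).le k) (comap_measurable (V k)).stronglyMeasurable hindep

lemma condExp_sum_range_mul_ae_eq_zero [IsFiniteMeasure P] (hV : ∀ i, Measurable (V i))
    (hind : iIndepFun V P) (hL2 : ∀ i, MemLp (V i) 2 P) {k : ℕ} (hmean : ∫ ω, V k ω ∂P = 0) :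
    P[(∑ i ∈ Finset.range k, V i) * V k | pastFiltration V hV k] =ᵐ[P] 0 := by
  have hint : Integrable ((∑ i ∈ Finset.range k, V i) * V k) P :=
    (hind.indepFun_finsetSum_of_notMem hV Finset.notMem_range_self).integrable_mul
      (integrable_finsetSum' _ fun i _ => (hL2 i).integrable one_le_two)
      ((hL2 k).integrable one_le_two)
  filter_upwards [condExp_mul_of_stronglyMeasurable_left
      (stronglyMeasurable_sum_range_pastFiltration hV k) hint ((hL2 k).integrable one_le_two),
    condExp_pastFiltration_ae_eq_zero hV hind hmean] with ω h1 h2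
  simp [h1, h2]

lemma submartingale_sq_sum_range [IsFiniteMeasure P] (hV : ∀ i, Measurable (V i))
    (hind : iIndepFun V P) (hL2 : ∀ i, MemLp (V i) 2 P) (hmean : ∀ i, ∫ ω, V i ω ∂P = 0) :
    Submartingale (fun k => (∑ i ∈ Finset.range k, V i) ^ 2) (pastFiltration V hV) P := by
  have hSL2 (k : ℕ) : MemLp (∑ i ∈ Finset.range k, V i) 2 P :=
    memLp_finsetSum' _ fun i _ => hL2 i
  refine submartingale_of_condExp_sub_nonneg_nat
    (fun k => (stronglyMeasurable_sum_range_pastFiltration hV k).pow 2)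
    (fun k => (hSL2 k).integrable_sq) fun k => ?_
  have hincr : (∑ i ∈ Finset.range (k + 1), V i) ^ 2 - (∑ i ∈ Finset.range k, V i) ^ 2 =
      (2 : ℝ) • ((∑ i ∈ Finset.range k, V i) * V k) + V k ^ 2 := by
    simp only [Finset.sum_range_succ, two_smul]; ring
  have hSV : Integrable ((∑ i ∈ Finset.range k, V i) * V k) P :=
    (hind.indepFun_finsetSum_of_notMem hV Finset.notMem_range_self).integrable_mul
      ((hSL2 k).integrable one_le_two) ((hL2 k).integrable one_le_two)
  rw [hincr]
  filter_upwards [condExp_add (g := V k ^ 2) (hSV.smul (2 : ℝ)) (hL2 k).integrable_sq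
      (pastFiltration V hV k),
    condExp_smul (2 : ℝ) ((∑ i ∈ Finset.range k, V i) * V k) (pastFiltration V hV k),
    condExp_sum_range_mul_ae_eq_zero hV hind hL2 (hmean k),
    condExp_nonneg (m := pastFiltration V hV k) (f := V k ^ 2)
      (ae_of_all P fun ω => sq_nonneg (V k ω))]
    with ω h1 h2 h3 h4
  rw [h1, Pi.add_apply, h2, Pi.smul_apply, h3]
  simpa using h4

lemma measure_exists_le_abs_sum_range_le [IsFiniteMeasure P] (hV : ∀ i, Measurable (V i))
    (hind : iIndepFun V P) (hL2 : ∀ i, MemLp (V i) 2 P) (hmean : ∀ i, ∫ ω, V i ω ∂P = 0)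
    (m : ℕ) {α : ℝ} (hα : 0 < α) :
    P {ω | ∃ k ≤ m, α ≤ |∑ i ∈ Finset.range k, V i ω|} ≤
      ENNReal.ofReal ((∑ i ∈ Finset.range m, variance (V i) P) / α ^ 2) := by
  set f : ℕ → Ω → ℝ := fun k => (∑ i ∈ Finset.range k, V i) ^ 2
  set s := {ω | α ^ 2 ≤ (Finset.range (m + 1)).sup' Finset.nonempty_range_add_one fun k => f k ω}
  have hs : {ω | ∃ k ≤ m, α ≤ |∑ i ∈ Finset.range k, V i ω|} = s := by
    ext ω
    simp [s, f, Finset.le_sup'_iff, sq_le_sq, abs_of_pos hα]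
  have hSL2 : MemLp (∑ i ∈ Finset.range m, V i) 2 P := memLp_finsetSum' _ fun i _ => hL2 i
  have hSm : ∫ ω, f m ω ∂P = ∑ i ∈ Finset.range m, variance (V i) P := by
    rw [← IndepFun.variance_sum (fun i _ => hL2 i) fun i _ j _ hij => hind.indepFun hij,
      variance_of_integral_eq_zero hSL2.aemeasurable]
    · simp [f]
    · simp [integral_finsetSum _ fun i _ => (hL2 i).integrable one_le_two, hmean]
  have hdoob : ENNReal.ofReal (α ^ 2) * P s ≤
      ENNReal.ofReal (∑ i ∈ Finset.range m, variance (V i) P) := by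
    calc ENNReal.ofReal (α ^ 2) * P s ≤ ENNReal.ofReal (∫ ω in s, f m ω ∂P) := by
          have h := maximal_ineq (submartingale_sq_sum_range hV hind hL2 hmean)
            (fun k ω => sq_nonneg _) (ε := ⟨α ^ 2, sq_nonneg α⟩) m
          exact (congrArg (· * P s)
            (ENNReal.ofReal_coe_nnreal (p := ⟨α ^ 2, sq_nonneg α⟩))).trans_le h
      _ ≤ ENNReal.ofReal (∫ ω, f m ω ∂P) :=
          ENNReal.ofReal_le_ofReal <| setIntegral_le_integral hSL2.integrable_sq <|
            ae_of_all P fun ω => sq_nonneg _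
      _ = _ := by rw [hSm]
  rw [hs, ENNReal.ofReal_div_of_pos (by positivity), ENNReal.le_div_iff_mul_le (by simp [hα.ne'])
    (by simp), mul_comm]
  exact hdoob

end Kolmogorov

section PartialSums

variable {Ω : Type*} {mΩ : MeasurableSpace Ω} {P : Measure Ω} [IsFiniteMeasure P]
  {W : ℕ → Ω → ℝ} {v : ℝ}

lemma measure_exists_le_abs_sum_range_sub_le (hW : ∀ i, Measurable (W i)) (hind : iIndepFun W P)
    (hL2 : ∀ i, MemLp (W i) 2 P) (hmean : ∀ i, ∫ ω, W i ω ∂P = 0)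
    (hvar : ∀ i, variance (W i) P ≤ v) (a M : ℕ) {α : ℝ} (hα : 0 < α) :
    P {ω | ∃ j, a ≤ j ∧ j ≤ a + M ∧
        α ≤ |∑ i ∈ Finset.range j, W i ω - ∑ i ∈ Finset.range a, W i ω|} ≤
      ENNReal.ofReal (M * v / α ^ 2) := by
  have hshift : Function.Injective (a + ·) := add_right_injective a
  calc _ ≤ P {ω | ∃ k ≤ M, α ≤ |∑ i ∈ Finset.range k, W (a + i) ω|} := by
        refine measure_mono fun ω ⟨j, haj, hjM, hj⟩ => ⟨j - a, by omega, ?_⟩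
        rwa [← Nat.add_sub_cancel' haj, Finset.sum_range_add, add_sub_cancel_left] at hj
    _ ≤ ENNReal.ofReal ((∑ i ∈ Finset.range M, variance (W (a + i)) P) / α ^ 2) :=
        measure_exists_le_abs_sum_range_le (fun i => hW _) (hind.precomp hshift)
          (fun i => hL2 _) (fun i => hmean _) M hα
    _ ≤ ENNReal.ofReal (M * v / α ^ 2) := by
        gcongr
        simpa using Finset.sum_le_card_nsmul (Finset.range M) _ _ fun i _ => hvar (a + i)

lemma measure_le_abs_sum_range_le (hind : iIndepFun W P)
    (hL2 : ∀ i, MemLp (W i) 2 P) (hmean : ∀ i, ∫ ω, W i ω ∂P = 0)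
    (hvar : ∀ i, variance (W i) P ≤ v) (n : ℕ) {c : ℝ} (hc : 0 < c) :
    P {ω | c ≤ |∑ i ∈ Finset.range n, W i ω|} ≤ ENNReal.ofReal (n * v / c ^ 2) := by
  have hSL2 : MemLp (∑ i ∈ Finset.range n, W i) 2 P := memLp_finsetSum' _ fun i _ => hL2 i
  have hS0 : ∫ ω, ∑ i ∈ Finset.range n, W i ω ∂P = 0 := by
    simp [integral_finsetSum _ fun i _ => (hL2 i).integrable one_le_two, hmean]
  calc _ = P {ω | c ≤ |(∑ i ∈ Finset.range n, W i) ω - P[∑ i ∈ Finset.range n, W i]|} := by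
        simp only [Finset.sum_apply, hS0, sub_zero]
    _ ≤ ENNReal.ofReal (variance (∑ i ∈ Finset.range n, W i) P / c ^ 2) :=
        meas_ge_le_variance_div_sq hSL2 hc
    _ ≤ ENNReal.ofReal (n * v / c ^ 2) := by
        rw [IndepFun.variance_sum (fun i _ => hL2 i) fun i _ j _ hij => hind.indepFun hij]
        gcongr
        simpa using Finset.sum_le_card_nsmul (Finset.range n) _ _ fun i _ => hvar i

lemma measure_exists_two_mul_le_abs_sum_range_sub_le (hW : ∀ i, Measurable (W i))
    (hind : iIndepFun W P) (hL2 : ∀ i, MemLp (W i) 2 P) (hmean : ∀ i, ∫ ω, W i ω ∂P = 0)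
    (hvar : ∀ i, variance (W i) P ≤ v) (n m : ℕ) {α : ℝ} (hα : 0 < α) :
    P {ω | ∃ j, n ≤ j + m ∧ j ≤ n + m ∧
        2 * α ≤ |∑ i ∈ Finset.range j, W i ω - ∑ i ∈ Finset.range n, W i ω|} ≤
      ENNReal.ofReal (2 * m * v / α ^ 2) := by
  set S : ℕ → Ω → ℝ := fun j ω => ∑ i ∈ Finset.range j, W i ω
  refine le_trans (measure_mono fun ω ⟨j, hnj, hjn, hj⟩ => ?_)
    (by exact_mod_cast
      measure_exists_le_abs_sum_range_sub_le hW hind hL2 hmean hvar (n - m) (2 * m) hα)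
  have htri : |S j ω - S n ω| ≤ |S j ω - S (n - m) ω| + |S n ω - S (n - m) ω| := by
    rw [abs_sub_comm (S n ω)]
    exact abs_sub_le _ _ _
  by_cases hjα : α ≤ |S j ω - S (n - m) ω|
  · exact ⟨j, by omega, by omega, hjα⟩
  · exact ⟨n, by omega, by omega, by linarith⟩

lemma measure_bad_le (hW : ∀ i, Measurable (W i)) (hind : iIndepFun W P)
    (hL2 : ∀ i, MemLp (W i) 2 P) (hmean : ∀ i, ∫ ω, W i ω ∂P = 0)
    (hvar : ∀ i, variance (W i) P ≤ v) {n : ℕ} (hn : 0 < n) {δ ε : ℝ} (hδ : 0 < δ)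
    (hδ2 : δ ≤ 1 / 2) (hε : 0 < ε) :
    P (Bad (fun j ω => (∑ i ∈ Finset.range j, W i ω) / √j) (fun _ => n) δ ε) ≤
      ENNReal.ofReal (136 * v / ε ^ 2 * δ) := by
  set S : ℕ → Ω → ℝ := fun j ω => ∑ i ∈ Finset.range j, W i ω
  set m := ⌊(n : ℝ) * δ⌋₊
  have hv : 0 ≤ v := (variance_nonneg _ _).trans (hvar 0)
  have hnR : (0 : ℝ) < n := Nat.cast_pos.mpr hn
  have hsn : 0 < √(n : ℝ) := sqrt_pos.mpr hnR
  have hm : (m : ℝ) ≤ n * δ := Nat.floor_le (by positivity)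
  set α := ε * √(n : ℝ) / 8
  set c := ε * √(n : ℝ) / (4 * δ)
  have hsub : Bad (fun j ω => S j ω / √j) (fun _ => n) δ ε ⊆
      {ω | ∃ j, n ≤ j + m ∧ j ≤ n + m ∧ 2 * α ≤ |S j ω - S n ω|} ∪ {ω | c ≤ |S n ω|} := by
    rintro ω ⟨j, hj, hjε⟩
    rw [Real.dist_eq] at hjε
    have hclose := (lt_div_iff₀ hsn).mp <| hjε.trans_le <|
      abs_div_sqrt_sub_div_sqrt_le (a := S j ω) (b := S n ω) hnR hδ2 hj
    by_cases hjn : 2 * α ≤ |S j ω - S n ω|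
    · exact Or.inl ⟨j, (le_add_floor_of_abs_sub_le hj).1, (le_add_floor_of_abs_sub_le hj).2, hjn⟩
    · refine Or.inr (show c ≤ |S n ω| from (div_le_iff₀ (by positivity)).mpr ?_)
      simp only [α, not_le] at hjn
      linarith
  have hA : 2 * m * v / α ^ 2 ≤ 128 * v / ε ^ 2 * δ := by
    rw [div_le_iff₀ (by positivity)]
    simp only [α, div_pow, mul_pow, sq_sqrt hnR.le]
    field_simp
    nlinarith [mul_le_mul_of_nonneg_left hm hv]
  have hB : n * v / c ^ 2 ≤ 8 * v / ε ^ 2 * δ := by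
    rw [div_le_iff₀ (by positivity)]
    simp only [c, div_pow, mul_pow, sq_sqrt hnR.le]
    field_simp
    nlinarith [mul_nonneg (mul_nonneg hv hδ.le) (by linarith : (0 : ℝ) ≤ 1 - 2 * δ)]
  calc _ ≤ _ := measure_mono hsub
    _ ≤ _ := measure_union_le _ _
    _ ≤ ENNReal.ofReal (128 * v / ε ^ 2 * δ) + ENNReal.ofReal (8 * v / ε ^ 2 * δ) := by
        gcongr
        · exact (measure_exists_two_mul_le_abs_sum_range_sub_le hW hind hL2 hmean hvar n m
            (by positivity)).trans (ENNReal.ofReal_le_ofReal hA)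
        · exact (measure_le_abs_sum_range_le hind hL2 hmean hvar n (by positivity)).trans
            (ENNReal.ofReal_le_ofReal hB)
    _ = ENNReal.ofReal (136 * v / ε ^ 2 * δ) := by
        rw [← ENNReal.ofReal_add (by positivity) (by positivity)]
        ring_nf

end PartialSums

lemma flucIdx_of_measure_bad_le {Ω S : Type*} {mΩ : MeasurableSpace Ω} {P : Measure Ω}
    [PseudoMetricSpace S] {X : ℕ → Ω → S}
    (h : ∀ ε > (0 : ℝ), ∃ K : ℝ, ∀ᶠ δ in 𝓝[>] 0, ∀ᶠ n in atTop,
      P (Bad X (fun _ => n) δ ε) ≤ ENNReal.ofReal (K * δ)) :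
    FlucIdx P X (fun n _ => n) := by
  intro ε hε
  obtain ⟨K, hK⟩ := h ε hε
  have hlim : Tendsto (fun δ : ℝ => ENNReal.ofReal (K * δ)) (𝓝[>] 0) (𝓝 0) := by
    simpa using ENNReal.tendsto_ofReal
      (((continuous_const_mul K).tendsto 0).mono_left nhdsWithin_le_nhds)
  refine le_antisymm (ge_of_tendsto hlim ?_) zero_le
  filter_upwards [hK, self_mem_nhdsWithin] with δ hδ hδ0
  exact (iInf_le _ ⟨δ, hδ0⟩).trans (limsup_le_of_le (by isBoundedDefault) hδ)

theorem stmt14_general {Ω : Type*} [MeasurableSpace Ω] (P : Measure Ω) [IsProbabilityMeasure P]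
    (Z : ℕ → Ω → ℝ) (hmeas : ∀ i, Measurable (Z i))
    (hindep : iIndepFun Z P)
    (hident : ∀ i, Measure.map (Z i) P = Measure.map (Z 1) P)
    (hL2 : Integrable (fun ω => Z 1 ω ^ 2) P) :
    FlucIdx P
      (fun n ω => (∑ i ∈ Finset.Icc 1 n, (Z i ω - ∫ ω', Z 1 ω' ∂P)) / Real.sqrt n)
      (fun n _ => n) := by
  set μ := ∫ ω, Z 1 ω ∂P
  set W : ℕ → Ω → ℝ := fun i ω => Z (i + 1) ω - μ
  have hid (i : ℕ) : IdentDistrib (Z (i + 1)) (Z 1) P P :=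
    ⟨(hmeas _).aemeasurable, (hmeas 1).aemeasurable, hident _⟩
  have hWid (i : ℕ) : IdentDistrib (W i) (W 0) P P :=
    (hid i).comp (measurable_id.sub_const μ)
  have hZL2 : MemLp (Z 1) 2 P :=
    (memLp_two_iff_integrable_sq (hmeas 1).aestronglyMeasurable).mpr hL2
  have hZL2' (i : ℕ) : MemLp (Z (i + 1)) 2 P := (hid i).symm.memLp_snd hZL2
  have hWL2 (i : ℕ) : MemLp (W i) 2 P := (hZL2' i).sub (memLp_const μ)
  have hWmean (i : ℕ) : ∫ ω, W i ω ∂P = 0 := by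
    rw [integral_sub ((hZL2' i).integrable one_le_two) (integrable_const μ), integral_const,
      (hid i).integral_eq]
    simp [μ]
  have hX : (fun n ω => (∑ i ∈ Finset.Icc 1 n, (Z i ω - μ)) / √n) =
      fun n ω => (∑ i ∈ Finset.range n, W i ω) / √n := by
    ext n ω
    rw [Finset.sum_Icc_one_eq_sum_range]
  rw [hX]
  refine flucIdx_of_measure_bad_le fun ε hε => ⟨136 * variance (W 0) P / ε ^ 2, ?_⟩
  filter_upwards [Ioo_mem_nhdsGT (by norm_num : (0 : ℝ) < 1 / 2)] with δ ⟨hδ, hδ2⟩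
  filter_upwards [eventually_gt_atTop 0] with n hn
  exact measure_bad_le (fun i => (hmeas _).sub_const μ)
    (hindep.precomp (add_left_injective 1) |>.comp _ fun _ => measurable_id.sub_const μ)
    hWL2 hWmean (fun i => (hWid i).variance_eq.le) hn hδ hδ2.le hε

/-- for an i.i.d. sequence with finite second moment, the normalized
centered partial sums satisfy the fluctuation condition (c). -/
theorem stmt14 {Ω : Type*} [MeasurableSpace Ω] (P : Measure Ω) [IsProbabilityMeasure P]
    (Z : ℕ → Ω → ℝ) (hmeas : ∀ i, Measurable (Z i))
    (hindep : iIndepFun Z P)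
    (hident : ∀ i, Measure.map (Z i) P = Measure.map (Z 1) P)
    (hL1 : Integrable (Z 1) P)
    (hL2 : Integrable (fun ω => Z 1 ω ^ 2) P) :
    FlucIdx P
      (fun n ω => (∑ i ∈ Finset.Icc 1 n, (Z i ω - ∫ ω', Z 1 ω' ∂P)) / Real.sqrt n)
      (fun n _ => n) :=
  stmt14_general P Z hmeas hindep hident hL2
end
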